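/- arXiv:1309.1412 — 6 statements merged into one kernel-verified Lean document; each statement's English description precedes it below -/
import Mathlib

section
/- Define g(t) = (1/4) · (1/2 + (λ/5)(2 sin(log t − log 2) − cos(log t − log 2))) / (1/2 + (λ/5)(2 sin(log t) − cos(log t))) for t ∈ (0,1). If λ ∈ [-√2/2, √2/2] and λ ≠ 0, then lim_{t→0⁺} g(t) does not exist; specifically, along t_n = exp((1−2n)π) and s_n = exp((1/2−2n)π), the sequences g(t_n) and g(s_n) converge to distinct limits. -/
noncomputable def gfun (lam t : ℝ) : ℝ :=
  (1/4) * (1/2 + (lam/5) * (2 * Real.sin (Real.log t - Real.log 2)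
      - Real.cos (Real.log t - Real.log 2))) /
    (1/2 + (lam/5) * (2 * Real.sin (Real.log t) - Real.cos (Real.log t)))


lemma eval1 (lam : ℝ) (n : ℕ) :
    gfun lam (Real.exp ((1 - 2*(n:ℝ)) * Real.pi)) =
      (1/4) * (1/2 + (lam/5)*(2 * Real.sin (Real.log 2) + Real.cos (Real.log 2)))
        / (1/2 + lam/5) := by
  unfold gfun
  rw [Real.log_exp]
  set k : ℤ := -(n:ℤ) with hk
  have h2 : (1 - 2*(n:ℝ)) * Real.pi - Real.log 2
      = (Real.pi - Real.log 2) + (k:ℝ) * (2*Real.pi) := by rw [hk]; push_cast; ring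
  have h1 : (1 - 2*(n:ℝ)) * Real.pi = Real.pi + (k:ℝ) * (2*Real.pi) := by
    rw [hk]; push_cast; ring
  rw [h2, Real.sin_add_int_mul_two_pi, Real.cos_add_int_mul_two_pi, h1,
    Real.sin_add_int_mul_two_pi, Real.cos_add_int_mul_two_pi,
    Real.sin_pi_sub, Real.cos_pi_sub, Real.sin_pi, Real.cos_pi]
  ring_nf

lemma eval2 (lam : ℝ) (n : ℕ) :
    gfun lam (Real.exp ((1/2 - 2*(n:ℝ)) * Real.pi)) =
      (1/4) * (1/2 + (lam/5)*(2 * Real.cos (Real.log 2) - Real.sin (Real.log 2)))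
        / (1/2 + 2*lam/5) := by
  unfold gfun
  rw [Real.log_exp]
  set k : ℤ := -(n:ℤ) with hk
  have h2 : (1/2 - 2*(n:ℝ)) * Real.pi - Real.log 2
      = (Real.pi/2 - Real.log 2) + (k:ℝ) * (2*Real.pi) := by rw [hk]; push_cast; ring
  have h1 : (1/2 - 2*(n:ℝ)) * Real.pi = Real.pi/2 + (k:ℝ) * (2*Real.pi) := by
    rw [hk]; push_cast; ring
  rw [h2, Real.sin_add_int_mul_two_pi, Real.cos_add_int_mul_two_pi, h1,
    Real.sin_add_int_mul_two_pi, Real.cos_add_int_mul_two_pi,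
    Real.sin_pi_div_two_sub, Real.cos_pi_div_two_sub, Real.sin_pi_div_two, Real.cos_pi_div_two]
  ring_nf

theorem stmt3 (lam : ℝ) (hlam : |lam| ≤ Real.sqrt 2 / 2) (h0 : lam ≠ 0) :
    (¬ ∃ L : ℝ, Filter.Tendsto (gfun lam) (nhdsWithin 0 (Set.Ioi 0)) (nhds L)) ∧
    ∃ a b : ℝ, a ≠ b ∧
      Filter.Tendsto (fun n : ℕ => gfun lam (Real.exp ((1 - 2*(n:ℝ)) * Real.pi)))
        Filter.atTop (nhds a) ∧
      Filter.Tendsto (fun n : ℕ => gfun lam (Real.exp ((1/2 - 2*(n:ℝ)) * Real.pi)))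
        Filter.atTop (nhds b) := by
  set s := Real.sin (Real.log 2) with hs_def
  set c := Real.cos (Real.log 2) with hc_def
  -- basic facts
  have hsq : lam^2 ≤ 1/2 := by
    have h2 : (Real.sqrt 2 / 2)^2 = 1/2 := by
      rw [div_pow, Real.sq_sqrt (by norm_num : (2:ℝ) ≥ 0)]; norm_num
    calc lam^2 = |lam|^2 := (sq_abs lam).symm
      _ ≤ (Real.sqrt 2 / 2)^2 := by
          apply pow_le_pow_left₀ (abs_nonneg lam) hlam
      _ = 1/2 := h2
  have hspos : 0 < s := by
    apply Real.sin_pos_of_pos_of_lt_pi (Real.log_pos (by norm_num))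
    calc Real.log 2 < 1 := by
          have := Real.log_two_lt_d9; linarith
      _ < Real.pi := by have := Real.pi_gt_three; linarith
  have hc1 : c ≤ 1 := Real.cos_le_one _
  have hs1 : s ≤ 1 := Real.sin_le_one _
  have hD1 : (0:ℝ) < 1/2 + lam/5 := by nlinarith [sq_nonneg (lam + 5/2)]
  have hD2 : (0:ℝ) < 1/2 + 2*lam/5 := by nlinarith [sq_nonneg (lam + 5/4)]
  set a := (1/4) * (1/2 + (lam/5)*(2 * s + c)) / (1/2 + lam/5) with ha_def
  set b := (1/4) * (1/2 + (lam/5)*(2 * c - s)) / (1/2 + 2*lam/5) with hb_def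
  have hB : 0 < (1 + 3*s - c)/10 + lam*s/5 := by
    have hlb : (0:ℝ) ≤ lam + 11/12 := by nlinarith [sq_nonneg (lam + 3/2)]
    nlinarith [mul_nonneg hlb hspos.le]
  have hab : a ≠ b := by
    intro h
    rw [ha_def, hb_def, div_eq_div_iff hD1.ne' hD2.ne'] at h
    apply h0
    have hz : lam * ((1 + 3*s - c)/10 + lam*s/5) = 0 := by linear_combination 4 * h
    rcases mul_eq_zero.mp hz with h' | h'
    · exact h'
    · exact absurd h' hB.ne'
  have hta : Filter.Tendsto (fun n : ℕ => gfun lam (Real.exp ((1 - 2*(n:ℝ)) * Real.pi)))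
      Filter.atTop (nhds a) := by
    have : (fun n : ℕ => gfun lam (Real.exp ((1 - 2*(n:ℝ)) * Real.pi))) = fun _ => a :=
      funext fun n => eval1 lam n
    rw [this]; exact tendsto_const_nhds
  have htb : Filter.Tendsto (fun n : ℕ => gfun lam (Real.exp ((1/2 - 2*(n:ℝ)) * Real.pi)))
      Filter.atTop (nhds b) := by
    have : (fun n : ℕ => gfun lam (Real.exp ((1/2 - 2*(n:ℝ)) * Real.pi))) = fun _ => b :=
      funext fun n => eval2 lam n
    rw [this]; exact tendsto_const_nhds
  have hn : Filter.Tendsto (fun n : ℕ => (n:ℝ)) Filter.atTop Filter.atTop :=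
    tendsto_natCast_atTop_atTop
  have hseq : ∀ d : ℝ, Filter.Tendsto (fun n : ℕ => Real.exp ((d - 2*(n:ℝ)) * Real.pi))
      Filter.atTop (nhdsWithin 0 (Set.Ioi 0)) := by
    intro d
    have h1 : Filter.Tendsto (fun n : ℕ => -(2*(n:ℝ))) Filter.atTop Filter.atBot :=
      Filter.tendsto_neg_atTop_atBot.comp (hn.const_mul_atTop (by norm_num : (0:ℝ) < 2))
    have h2 : Filter.Tendsto (fun n : ℕ => d + -(2*(n:ℝ))) Filter.atTop Filter.atBot :=
      Filter.tendsto_atBot_add_const_left _ d h1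
    have h2' : Filter.Tendsto (fun n : ℕ => d - 2*(n:ℝ)) Filter.atTop Filter.atBot := by
      simpa [sub_eq_add_neg] using h2
    have h3 : Filter.Tendsto (fun n : ℕ => (d - 2*(n:ℝ)) * Real.pi) Filter.atTop Filter.atBot :=
      Filter.Tendsto.atBot_mul_const Real.pi_pos h2'
    have h4 : Filter.Tendsto (fun n : ℕ => Real.exp ((d - 2*(n:ℝ)) * Real.pi))
        Filter.atTop (nhds 0) := Real.tendsto_exp_atBot.comp h3
    exact tendsto_nhdsWithin_of_tendsto_nhds_of_eventually_within _ h4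
      (Filter.Eventually.of_forall fun n => Real.exp_pos _)
  constructor
  · rintro ⟨L, hL⟩
    have hLa : a = L := tendsto_nhds_unique hta (hL.comp (hseq 1))
    have hLb : b = L := tendsto_nhds_unique htb (by
      have := hL.comp (hseq (1/2)); exact this)
    exact hab (hLa.trans hLb.symm)
  · exact ⟨a, b, hab, hta, htb⟩
end

section
/- The map (x₁,x₂) ↦ |x₁| + |x₂| − |x₁||x₂|/(|x₁|+|x₂|) for (x₁,x₂) ≠ (0,0), and 0 at the origin, defines a norm on ℝ². -/
/-!
Write `a = |x₁|`, `b = |x₂|`. For `a, b ≥ 0` the formula equals `b + a² / (a + b)`, which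
is at least `max a b`, so `D` dominates the sup norm and is definite. It is homogeneous of
degree one, monotone in each of `a` and `b`, and subadditive in `(a, b)`: the term
`a² / (a + b)` is subadditive by Sedrakyan's (Titu's) inequality. Monotonicity turns the
coordinatewise triangle inequality `|x₁ + y₁| ≤ |x₁| + |y₁|` into the triangle inequality for `D`.
-/

noncomputable def Dnorm (x : ℝ × ℝ) : ℝ :=
  if x = 0 then 0 else |x.1| + |x.2| - |x.1| * |x.2| / (|x.1| + |x.2|)

theorem sq_add_div_add_le {a₁ a₂ s₁ s₂ : ℝ} (ha₁ : 0 ≤ a₁) (ha₂ : 0 ≤ a₂) (hs₁ : a₁ ≤ s₁)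
    (hs₂ : a₂ ≤ s₂) : (a₁ + a₂) ^ 2 / (s₁ + s₂) ≤ a₁ ^ 2 / s₁ + a₂ ^ 2 / s₂ := by
  rcases (ha₁.trans hs₁).eq_or_lt with rfl | hs₁
  · simp [le_antisymm hs₁ ha₁]
  rcases (ha₂.trans hs₂).eq_or_lt with rfl | hs₂
  · simp [le_antisymm hs₂ ha₂]
  simpa [Fin.sum_univ_two] using
    Finset.sq_sum_div_le_sum_sq_div Finset.univ ![a₁, a₂] (g := ![s₁, s₂])
      (by simp [Fin.forall_fin_two, hs₁, hs₂])

noncomputable def Dprofile (a b : ℝ) : ℝ := a + b - a * b / (a + b)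

-- The case split in `Dnorm` is harmless: at the origin the formula gives `0` since `0 / 0 = 0`.
theorem Dnorm_eq_Dprofile (x : ℝ × ℝ) : Dnorm x = Dprofile |x.1| |x.2| := by
  unfold Dnorm
  split_ifs with hx
  · simp [hx, Dprofile]
  · rfl

namespace Dprofile

theorem comm (a b : ℝ) : Dprofile a b = Dprofile b a := by
  simp only [Dprofile, add_comm a b, mul_comm a b]

theorem mul (c a b : ℝ) : Dprofile (c * a) (c * b) = c * Dprofile a b := by
  rcases eq_or_ne c 0 with rfl | hc
  · simp [Dprofile]
  rw [Dprofile, Dprofile, ← mul_add, show c * a * (c * b) = c * (c * (a * b)) by ring,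
    mul_div_mul_left _ _ hc, mul_div_assoc, ← mul_sub]

variable {a b : ℝ}

theorem eq_add_sq_div (ha : 0 ≤ a) (hb : 0 ≤ b) : Dprofile a b = b + a ^ 2 / (a + b) := by
  rcases (add_nonneg ha hb).eq_or_lt with hab | hab
  · obtain ⟨rfl, rfl⟩ := (add_eq_zero_iff_of_nonneg ha hb).1 hab.symm
    simp [Dprofile]
  · rw [Dprofile]
    field_simp
    ring

theorem le_right (ha : 0 ≤ a) (hb : 0 ≤ b) : b ≤ Dprofile a b := by
  rw [eq_add_sq_div ha hb]
  exact le_add_of_nonneg_right (by positivity)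

theorem mono_right {B : ℝ} (ha : 0 ≤ a) (hb : 0 ≤ b) (hbB : b ≤ B) :
    Dprofile a b ≤ Dprofile a B := by
  rw [eq_add_sq_div ha hb, eq_add_sq_div ha (hb.trans hbB)]
  rcases ha.eq_or_lt with rfl | ha
  · simpa using hbB
  have h₁ : 0 < a + b := by positivity
  have h₂ : 0 < a + B := by linarith
  rw [add_div' _ _ _ h₁.ne', add_div' _ _ _ h₂.ne', div_le_div_iff₀ h₁ h₂]
  have hB : 0 ≤ B := hb.trans hbB
  nlinarith [mul_nonneg (sub_nonneg.2 hbB) (by positivity : 0 ≤ a * B + a * b + b * B)]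

theorem le_left (ha : 0 ≤ a) (hb : 0 ≤ b) : a ≤ Dprofile a b :=
  comm a b ▸ le_right hb ha

theorem mono {A B : ℝ} (ha : 0 ≤ a) (hb : 0 ≤ b) (haA : a ≤ A) (hbB : b ≤ B) :
    Dprofile a b ≤ Dprofile A B :=
  calc Dprofile a b ≤ Dprofile a B := mono_right ha hb hbB
    _ = Dprofile B a := comm a B
    _ ≤ Dprofile B A := mono_right (hb.trans hbB) ha haA
    _ = Dprofile A B := comm B A

theorem add_le {a₁ b₁ a₂ b₂ : ℝ} (ha₁ : 0 ≤ a₁) (hb₁ : 0 ≤ b₁) (ha₂ : 0 ≤ a₂) (hb₂ : 0 ≤ b₂) :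
    Dprofile (a₁ + a₂) (b₁ + b₂) ≤ Dprofile a₁ b₁ + Dprofile a₂ b₂ := by
  rw [eq_add_sq_div ha₁ hb₁, eq_add_sq_div ha₂ hb₂,
    eq_add_sq_div (add_nonneg ha₁ ha₂) (add_nonneg hb₁ hb₂), add_add_add_comm a₁]
  have := sq_add_div_add_le ha₁ ha₂ (le_add_of_nonneg_right hb₁) (le_add_of_nonneg_right hb₂)
  linarith

end Dprofile

theorem norm_le_Dnorm (x : ℝ × ℝ) : ‖x‖ ≤ Dnorm x := by
  rw [Dnorm_eq_Dprofile, Prod.norm_def, Real.norm_eq_abs, Real.norm_eq_abs]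
  exact max_le (Dprofile.le_left (abs_nonneg _) (abs_nonneg _))
    (Dprofile.le_right (abs_nonneg _) (abs_nonneg _))

theorem Dnorm_smul (c : ℝ) (x : ℝ × ℝ) : Dnorm (c • x) = |c| * Dnorm x := by
  simp only [Dnorm_eq_Dprofile, Prod.smul_fst, Prod.smul_snd, smul_eq_mul, abs_mul,
    Dprofile.mul]

theorem Dnorm_add_le (x y : ℝ × ℝ) : Dnorm (x + y) ≤ Dnorm x + Dnorm y := by
  simp only [Dnorm_eq_Dprofile, Prod.fst_add, Prod.snd_add]
  calc Dprofile |x.1 + y.1| |x.2 + y.2|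
      ≤ Dprofile (|x.1| + |y.1|) (|x.2| + |y.2|) :=
        Dprofile.mono (abs_nonneg _) (abs_nonneg _) (abs_add_le _ _) (abs_add_le _ _)
    _ ≤ Dprofile |x.1| |x.2| + Dprofile |y.1| |y.2| :=
        Dprofile.add_le (abs_nonneg _) (abs_nonneg _) (abs_nonneg _) (abs_nonneg _)

theorem stmt6 :
    (Dnorm 0 = 0) ∧
    (∀ x : ℝ × ℝ, Dnorm x = 0 → x = 0) ∧
    (∀ x : ℝ × ℝ, 0 ≤ Dnorm x) ∧
    (∀ (c : ℝ) (x : ℝ × ℝ), Dnorm (c • x) = |c| * Dnorm x) ∧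
    (∀ x y : ℝ × ℝ, Dnorm (x + y) ≤ Dnorm x + Dnorm y) :=
  ⟨by simp [Dnorm],
    fun x hx => norm_le_zero_iff.1 (hx ▸ norm_le_Dnorm x),
    fun x => (norm_nonneg x).trans (norm_le_Dnorm x),
    Dnorm_smul, Dnorm_add_le⟩
end

section
/- Let λ ∈ [-√2/2, √2/2], let V have df H_λ(u) = u(1+λ sin(log u)) on [0,1], let U be uniform on (0,1) independent of V, and let X = −V/U. Then the df F_λ of −V/U satisfies: F_λ(x) = |x|^{−1}(1/2 + λ/5) for x ≤ −1, and F_λ(x) = 1 − |x|(1/2 + (λ/5)(2 sin(log|x|) − cos(log|x|))) for −1 < x < 0. -/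
/-! Conditioning on `U = u`, the event `-V/U ≤ -c` is `V ≥ c u`, so by independence its
probability is `1 - ∫₀¹ H(min (c u) 1) du`; the atoms of the law of `V` are countable, so they
are missed by almost every `c u`. Substituting `t = c u` gives `1 - c⁻¹ ∫₀^c H(min t 1) dt`, and
`HfunPrimitive` is an explicit primitive of `H`, while `H(min t 1) = 1` for `t ≥ 1`. -/

open MeasureTheory

noncomputable def Hfun (lam u : ℝ) : ℝ :=
  if u = 0 then 0 else u * (1 + lam * Real.sin (Real.log u))

open Real Set Filter

lemma continuous_mul_of_continuousOn_compl_zero {f : ℝ → ℝ} {C : ℝ} (hf : ContinuousOn f {0}ᶜ)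
    (hC : ∀ t, |f t| ≤ C) : Continuous fun t => t * f t := by
  refine continuous_iff_continuousAt.2 fun x => ?_
  rcases eq_or_ne x 0 with rfl | hx
  · have hbdd : IsBoundedUnder (· ≤ ·) (nhds 0) (fun t => ‖f t‖) := isBoundedUnder_of ⟨C, hC⟩
    simpa [ContinuousAt] using tendsto_id.zero_mul_isBoundedUnder_le hbdd
  · exact continuousAt_id.mul (hf.continuousAt (isOpen_compl_singleton.mem_nhds hx))

lemma Hfun_eq (lam t : ℝ) : Hfun lam t = t * (1 + lam * sin (log t)) := by
  unfold Hfun; split_ifs with ht <;> simp [ht]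

lemma Hfun_one (lam : ℝ) : Hfun lam 1 = 1 := by simp [Hfun_eq]

lemma Hfun_nonneg {lam t : ℝ} (hlam : |lam| ≤ 1) (ht : 0 ≤ t) : 0 ≤ Hfun lam t := by
  have : |lam * sin (log t)| ≤ 1 := by
    rw [abs_mul]; exact mul_le_one₀ hlam (abs_nonneg _) (abs_sin_le_one _)
  rw [Hfun_eq]
  exact mul_nonneg ht (by linarith [neg_abs_le (lam * sin (log t))])

lemma continuous_Hfun (lam : ℝ) : Continuous (Hfun lam) := by
  have hC : ∀ t, |1 + lam * sin (log t)| ≤ 1 + |lam| := fun t => (abs_add_le _ _).trans (by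
    rw [abs_one, abs_mul]
    gcongr
    exact mul_le_of_le_one_right (abs_nonneg lam) (abs_sin_le_one _))
  simpa only [← Hfun_eq] using continuous_mul_of_continuousOn_compl_zero
    (f := fun t => 1 + lam * sin (log t)) (by fun_prop (disch := simp_all)) hC

noncomputable def HfunPrimitive (lam c : ℝ) : ℝ :=
  c ^ 2 / 2 + lam * (c ^ 2 / 5) * (2 * sin (log c) - cos (log c))

lemma continuous_HfunPrimitive (lam : ℝ) : Continuous (HfunPrimitive lam) := by
  have hC : ∀ t, |2 * sin (log t) - cos (log t)| ≤ 3 := fun t => by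
    have := abs_sin_le_one (log t); have := abs_cos_le_one (log t)
    rw [abs_le] at *; constructor <;> linarith
  have h := continuous_mul_of_continuousOn_compl_zero
    (f := fun t => 2 * sin (log t) - cos (log t)) (by fun_prop (disch := simp_all)) hC
  have h' : Continuous fun t =>
      t ^ 2 / 2 + lam / 5 * (t * (t * (2 * sin (log t) - cos (log t)))) := by
    fun_prop
  convert h' using 2 with t
  unfold HfunPrimitive
  ring

lemma hasDerivAt_HfunPrimitive (lam : ℝ) {t : ℝ} (ht : t ≠ 0) :
    HasDerivAt (HfunPrimitive lam) (Hfun lam t) t := by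
  have hlog := hasDerivAt_log ht
  have hsin := (hasDerivAt_sin (log t)).comp t hlog
  have hcos := (hasDerivAt_cos (log t)).comp t hlog
  have h := ((hasDerivAt_pow 2 t).div_const 2).add
    (((hasDerivAt_pow 2 t).div_const 5).const_mul lam |>.mul ((hsin.const_mul 2).sub hcos))
  refine h.congr_deriv ?_
  simp only [Pi.sub_apply, Function.comp_apply, Hfun_eq]
  field_simp
  ring

lemma integral_Hfun {c : ℝ} (lam : ℝ) (hc : 0 ≤ c) :
    ∫ t in 0..c, Hfun lam t = HfunPrimitive lam c := by
  rw [intervalIntegral.integral_eq_sub_of_hasDerivAt_of_le hc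
    (continuous_HfunPrimitive lam).continuousOn
    (fun t ht => hasDerivAt_HfunPrimitive lam ht.1.ne')
    ((continuous_Hfun lam).intervalIntegrable _ _)]
  simp [HfunPrimitive]

lemma integral_Hfun_min_one_of_le_one (lam : ℝ) {a : ℝ} (ha₀ : 0 ≤ a) (ha₁ : a ≤ 1) :
    ∫ t in 0..a, Hfun lam (min t 1) = HfunPrimitive lam a := by
  rw [← integral_Hfun lam ha₀]
  refine intervalIntegral.integral_congr fun t ht => ?_
  rw [uIcc_of_le ha₀] at ht
  simp only [min_eq_left (ht.2.trans ha₁)]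

lemma integral_Hfun_min_one_of_one_le (lam : ℝ) {a : ℝ} (ha : 1 ≤ a) :
    ∫ t in 0..a, Hfun lam (min t 1) = HfunPrimitive lam 1 + (a - 1) := by
  have hint : ∀ b c : ℝ, IntervalIntegrable (fun t => Hfun lam (min t 1)) volume b c := fun b c =>
    ((continuous_Hfun lam).comp (continuous_id.min continuous_const)).intervalIntegrable b c
  rw [← intervalIntegral.integral_add_adjacent_intervals (hint 0 1) (hint 1 a),
    integral_Hfun_min_one_of_le_one lam zero_le_one le_rfl]
  congr 1
  rw [intervalIntegral.integral_congr (g := fun _ => (1 : ℝ)) fun t ht => ?_]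
  · simp
  · rw [uIcc_of_le ha] at ht
    simp [min_eq_right ht.1, Hfun_one]

lemma lintegral_ofReal_Hfun_min_mul {lam c : ℝ} (hlam : |lam| ≤ 1) (hc : 0 < c) :
    ∫⁻ u in Ioo 0 1, ENNReal.ofReal (Hfun lam (min (c * u) 1))
      = ENNReal.ofReal (c⁻¹ * ∫ t in 0..c, Hfun lam (min t 1)) := by
  have hcont : Continuous fun u => Hfun lam (min (c * u) 1) := by
    have := continuous_Hfun lam; fun_prop
  rw [← ofReal_integral_eq_lintegral_ofReal
      (hcont.continuousOn.integrableOn_Icc.mono_set Ioo_subset_Icc_self)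
      ((ae_restrict_iff' measurableSet_Ioo).2 (ae_of_all _ fun u hu =>
        Hfun_nonneg hlam (le_min (mul_pos hc hu.1).le zero_le_one))),
    ← integral_Ioc_eq_integral_Ioo, ← intervalIntegral.integral_of_le zero_le_one,
    intervalIntegral.integral_comp_mul_left (fun t => Hfun lam (min t 1)) hc.ne',
    mul_zero, mul_one, smul_eq_mul]

lemma ae_measure_singleton_mul_eq_zero (μ : Measure ℝ) [SFinite μ] (ν : Measure ℝ)
    [NullSingletonClass ν] {c : ℝ} (hc : c ≠ 0) : ∀ᵐ u ∂ν, μ {c * u} = 0 := by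
  have hatoms : {t : ℝ | 0 < μ {t}}.Countable := by
    simpa using Measure.countable_meas_level_set_pos (μ := μ) measurable_id
  have hnull := (hatoms.preimage (mul_right_injective₀ hc)).measure_zero ν
  filter_upwards [measure_eq_zero_iff_ae_notMem.1 hnull] with u hu
  simpa using hu

section Quotient

variable {Ω : Type*} [MeasurableSpace Ω] (P : Measure Ω) [IsProbabilityMeasure P] {V U : Ω → ℝ}
  {lam : ℝ}

lemma measure_neg_div_le_neg (hV : Measurable V) (hU : Measurable U)
    (hindep : ProbabilityTheory.IndepFun V U P) (hUlaw : P.map U = volume.restrict (Ioo 0 1))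
    {c : ℝ} (hc : 0 < c) :
    P {ω | -(V ω) / U ω ≤ -c} = 1 - ∫⁻ u in Ioo 0 1, P.map V (Iic (c * u)) := by
  set μ := P.map V
  have : IsProbabilityMeasure μ := Measure.isProbabilityMeasure_map hV.aemeasurable
  have hjoint : P.map (fun ω => (V ω, U ω)) = μ.prod (volume.restrict (Ioo 0 1)) := by
    rw [← hUlaw]
    exact (ProbabilityTheory.indepFun_iff_map_prod_eq_prod_map_map hV.aemeasurable
      hU.aemeasurable).1 hindep
  set S : Set (ℝ × ℝ) := {p | -p.1 / p.2 ≤ -c}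
  have hS : MeasurableSet S :=
    measurableSet_le (measurable_fst.neg.div measurable_snd) measurable_const
  have hslice : ∀ u ∈ Ioo (0 : ℝ) 1, μ ((fun v => (v, u)) ⁻¹' S) = 1 - μ (Iio (c * u)) := by
    intro u hu
    have : (fun v => (v, u)) ⁻¹' S = (Iio (c * u))ᶜ := by
      ext v
      simp [S, div_le_iff₀ hu.1]
    rw [this, prob_compl_eq_one_sub measurableSet_Iio]
  have hIio : ∀ᵐ u ∂volume.restrict (Ioo (0 : ℝ) 1), μ (Iio (c * u)) = μ (Iic (c * u)) := by
    filter_upwards [ae_measure_singleton_mul_eq_zero μ _ hc.ne'] with u hu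
    rw [← Iio_union_right, measure_union (by simp) (measurableSet_singleton _), hu, add_zero]
  have hmono : Monotone fun u => μ (Iic (c * u)) := fun s t hst =>
    measure_mono (Iic_subset_Iic.2 (by gcongr))
  calc P {ω | -(V ω) / U ω ≤ -c}
      = ∫⁻ u in Ioo 0 1, μ ((fun v => (v, u)) ⁻¹' S) := by
        rw [← Measure.prod_apply_symm hS, ← hjoint, Measure.map_apply (hV.prodMk hU) hS]
        rfl
    _ = ∫⁻ u in Ioo 0 1, (1 - μ (Iic (c * u))) := by
        refine (setLIntegral_congr_fun measurableSet_Ioo hslice).trans (lintegral_congr_ae ?_)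
        filter_upwards [hIio] with u hu
        rw [hu]
    _ = 1 - ∫⁻ u in Ioo 0 1, μ (Iic (c * u)) := by
        rw [lintegral_sub hmono.measurable
          (ne_top_of_le_ne_top (by simp) (lintegral_mono fun _ => prob_le_one))
          (ae_of_all _ fun _ => prob_le_one)]
        simp

lemma map_Iic_eq_ofReal_Hfun (hV : Measurable V) (hVrange : ∀ ω, V ω ∈ Icc (0 : ℝ) 1)
    (hVlaw : ∀ u ∈ Icc (0 : ℝ) 1, P {ω | V ω ≤ u} = ENNReal.ofReal (Hfun lam u))
    {t : ℝ} (ht : 0 ≤ t) : P.map V (Iic t) = ENNReal.ofReal (Hfun lam (min t 1)) := by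
  rw [Measure.map_apply hV measurableSet_Iic]
  rcases le_total t 1 with ht₁ | ht₁
  · rw [min_eq_left ht₁]; exact hVlaw t ⟨ht, ht₁⟩
  · have : V ⁻¹' Iic t = univ := eq_univ_of_forall fun ω => (hVrange ω).2.trans ht₁
    simp [this, min_eq_right ht₁, Hfun_one]

lemma measure_neg_div_le_neg_eq_ofReal (hlam : |lam| ≤ 1) (hV : Measurable V)
    (hU : Measurable U) (hindep : ProbabilityTheory.IndepFun V U P)
    (hVrange : ∀ ω, V ω ∈ Icc (0 : ℝ) 1)
    (hVlaw : ∀ u ∈ Icc (0 : ℝ) 1, P {ω | V ω ≤ u} = ENNReal.ofReal (Hfun lam u))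
    (hUlaw : P.map U = volume.restrict (Ioo 0 1)) {c : ℝ} (hc : 0 < c) :
    P {ω | -(V ω) / U ω ≤ -c}
      = ENNReal.ofReal (1 - c⁻¹ * ∫ t in 0..c, Hfun lam (min t 1)) := by
  have hI : 0 ≤ c⁻¹ * ∫ t in 0..c, Hfun lam (min t 1) :=
    mul_nonneg (inv_nonneg.2 hc.le) (intervalIntegral.integral_nonneg hc.le fun t ht =>
      Hfun_nonneg hlam (le_min ht.1 zero_le_one))
  rw [measure_neg_div_le_neg P hV hU hindep hUlaw hc, ENNReal.ofReal_sub 1 hI,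
    ENNReal.ofReal_one, ← lintegral_ofReal_Hfun_min_mul hlam hc]
  congr 1
  refine setLIntegral_congr_fun measurableSet_Ioo fun u hu => ?_
  exact map_Iic_eq_ofReal_Hfun P hV hVrange hVlaw (mul_pos hc hu.1).le

end Quotient

theorem stmt7 {Ω : Type*} [MeasurableSpace Ω] (P : Measure Ω) [IsProbabilityMeasure P]
    (lam : ℝ) (hlam : |lam| ≤ Real.sqrt 2 / 2)
    (V U : Ω → ℝ) (hV : Measurable V) (hU : Measurable U)
    (hindep : ProbabilityTheory.IndepFun V U P)
    (hVrange : ∀ ω, V ω ∈ Set.Icc (0:ℝ) 1)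
    (hVlaw : ∀ u ∈ Set.Icc (0:ℝ) 1, P {ω | V ω ≤ u} = ENNReal.ofReal (Hfun lam u))
    (hUlaw : P.map U = volume.restrict (Set.Ioo 0 1)) :
    (∀ x : ℝ, x ≤ -1 →
      P {ω | -(V ω) / U ω ≤ x} = ENNReal.ofReal (|x|⁻¹ * (1/2 + lam/5))) ∧
    (∀ x : ℝ, -1 < x → x < 0 →
      P {ω | -(V ω) / U ω ≤ x} = ENNReal.ofReal
        (1 - |x| * (1/2 + (lam/5) * (2 * Real.sin (Real.log |x|)
          - Real.cos (Real.log |x|))))) := by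
  have hlam₁ : |lam| ≤ 1 := hlam.trans (by
    nlinarith [Real.sq_sqrt (zero_le_two : (0 : ℝ) ≤ 2), Real.sqrt_nonneg 2])
  have hlaw : ∀ x < 0, P {ω | -(V ω) / U ω ≤ x}
      = ENNReal.ofReal (1 - |x|⁻¹ * ∫ t in 0..|x|, Hfun lam (min t 1)) := fun x hx => by
    simpa [abs_of_neg hx] using measure_neg_div_le_neg_eq_ofReal P hlam₁ hV hU hindep hVrange
      hVlaw hUlaw (neg_pos.2 hx)
  refine ⟨fun x hx => ?_, fun x hx₁ hx => ?_⟩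
  · have hx₁ : 1 ≤ |x| := by rw [abs_of_neg (by linarith)]; linarith
    rw [hlaw x (by linarith), integral_Hfun_min_one_of_one_le lam hx₁, HfunPrimitive,
      Real.log_one, Real.sin_zero, Real.cos_zero]
    congr 1
    field_simp
    ring
  · have hx₀ : 0 < |x| := abs_pos.2 hx.ne
    rw [hlaw x hx, integral_Hfun_min_one_of_le_one lam hx₀.le (by rw [abs_of_neg hx]; linarith),
      HfunPrimitive]
    congr 1
    field_simp
end

section
/- For every integer k ≥ 2, ∑_{i=1}^{k−1} 1/(4 sin²(iπ/(2k))) = (k−1)(k+1)/6. -/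
/-!
With `ζ = exp (2πi/n)` one has `1 / (4 sin² (jπ/n)) = -ζ^j / (1 - ζ^j)²`. For a nontrivial `n`-th
root of unity `x`, summation by parts gives `∑_{m<n} m (n - m) x^m = 2n x / (1 - x)²`; summing this
over `x = ζ^j`, `1 ≤ j < n`, and exchanging the sums (`∑_j ζ^{jm} = -1` for `0 < m < n`) yields
`∑_{j=1}^{n-1} 1 / (4 sin² (jπ/n)) = (n² - 1)/12`. The theorem is the case `n = 2k`: the terms `j`
and `2k - j` agree, and the middle term `j = k` is `1/4`.
-/

open Finset

section CommRing

variable {R : Type*} [CommRing R]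

theorem one_sub_mul_sum_range_mul_pow (x : R) (n : ℕ) :
    (1 - x) * ∑ m ∈ range n, (m : R) * x ^ m = ∑ m ∈ range n, x ^ m - 1 - (n - 1) * x ^ n := by
  induction n with
  | zero => simp
  | succ n ih =>
    rw [sum_range_succ, sum_range_succ, mul_add, ih]
    push_cast
    ring

theorem one_sub_sq_mul_sum_range_mul_sub_mul_pow (x : R) (n : ℕ) :
    (1 - x) ^ 2 * ∑ m ∈ range n, (m : R) * (n - m) * x ^ m
      = (n + 1) * x + (n - 1) * x ^ (n + 1) - 2 * ∑ m ∈ range (n + 1), x ^ m + 2 := by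
  induction n with
  | zero => simp
  | succ n ih =>
    have hsplit : ∑ m ∈ range (n + 1), (m : R) * ((n + 1 : ℕ) - m) * x ^ m
        = ∑ m ∈ range n, (m : R) * (n - m) * x ^ m + ∑ m ∈ range n, (m : R) * x ^ m
          + n * x ^ n := by
      rw [sum_range_succ, ← sum_add_distrib]
      push_cast
      congr 1
      · exact sum_congr rfl fun m _ => by ring
      · ring
    rw [hsplit, sum_range_succ _ (n + 1), sum_range_succ] at *
    push_cast
    linear_combination ih + (1 - x) * one_sub_mul_sum_range_mul_pow x n - geom_sum_mul x n

theorem two_mul_sum_range_cast (n : ℕ) : 2 * ∑ m ∈ range n, (m : R) = n * (n - 1) := by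
  induction n with
  | zero => simp
  | succ n ih => rw [sum_range_succ]; push_cast; linear_combination ih

theorem six_mul_sum_range_mul_sub (n : ℕ) :
    6 * ∑ m ∈ range n, (m : R) * (n - m) = n ^ 3 - n := by
  induction n with
  | zero => simp
  | succ n ih =>
    rw [sum_range_succ]
    push_cast
    simp only [add_sub_right_comm _ (1 : R), mul_add, sum_add_distrib, mul_one]
    linear_combination ih + 3 * two_mul_sum_range_cast (R := R) n

end CommRing

section Field

variable {K : Type*} [Field K]

theorem sum_range_mul_sub_mul_pow_of_pow_eq_one {x : K} {n : ℕ} (hxn : x ^ n = 1) (hx : x ≠ 1) :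
    ∑ m ∈ range n, (m : K) * (n - m) * x ^ m = 2 * n * x / (1 - x) ^ 2 := by
  have hgeom : ∑ m ∈ range n, x ^ m = 0 := by
    rw [geom_sum_eq hx, hxn, sub_self, zero_div]
  have h := one_sub_sq_mul_sum_range_mul_sub_mul_pow x n
  rw [sum_range_succ, hgeom, pow_succ x n, hxn] at h
  rw [eq_div_iff (pow_ne_zero 2 (sub_ne_zero.mpr hx.symm))]
  linear_combination h

theorem IsPrimitiveRoot.sum_Ico_one_pow_pow {ζ : K} {n m : ℕ} (hζ : IsPrimitiveRoot ζ n)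
    (hm : 0 < m) (hmn : m < n) : ∑ j ∈ Ico 1 n, (ζ ^ j) ^ m = -1 := by
  have hζm : ζ ^ m ≠ 1 := hζ.pow_ne_one_of_pos_of_lt hm.ne' hmn
  simp_rw [← pow_mul, mul_comm _ m, pow_mul]
  rw [geom_sum_Ico hζm (by omega), ← pow_mul, mul_comm, pow_mul, hζ.pow_eq_one, one_pow, pow_one,
    ← neg_sub, neg_div, div_self (sub_ne_zero.mpr hζm)]

theorem IsPrimitiveRoot.sum_pow_div_one_sub_pow_sq [CharZero K] {ζ : K} {n : ℕ}
    (hζ : IsPrimitiveRoot ζ n) (hn : 0 < n) :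
    ∑ j ∈ Ico 1 n, ζ ^ j / (1 - ζ ^ j) ^ 2 = -((n : K) ^ 2 - 1) / 12 := by
  have hn' : (n : K) ≠ 0 := Nat.cast_ne_zero.mpr hn.ne'
  have hterm : ∀ j ∈ Ico 1 n, ζ ^ j / (1 - ζ ^ j) ^ 2
      = (2 * n : K)⁻¹ * ∑ m ∈ range n, (m : K) * (n - m) * (ζ ^ j) ^ m := by
    intro j hj
    obtain ⟨hj1, hjn⟩ := mem_Ico.mp hj
    rw [sum_range_mul_sub_mul_pow_of_pow_eq_one (by rw [← pow_mul, mul_comm, pow_mul,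
      hζ.pow_eq_one, one_pow]) (hζ.pow_ne_one_of_pos_of_lt (by omega) hjn)]
    field_simp
  have hinner : ∀ m ∈ range n, ∑ j ∈ Ico 1 n, (m : K) * (n - m) * (ζ ^ j) ^ m
      = -((m : K) * (n - m)) := by
    intro m hm
    rcases Nat.eq_zero_or_pos m with rfl | hm0
    · simp
    · rw [← mul_sum, hζ.sum_Ico_one_pow_pow hm0 (mem_range.mp hm), mul_neg_one]
  rw [sum_congr rfl hterm, ← mul_sum, sum_comm, sum_congr rfl hinner, sum_neg_distrib]
  have h6 := six_mul_sum_range_mul_sub (R := K) n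
  field_simp
  linear_combination -2 * h6

end Field

namespace Complex

-- Also true where `sin z = 0`: both sides are then `1 / 0 = 0`.
theorem one_div_four_mul_sin_sq (z : ℂ) :
    1 / (4 * sin z ^ 2) = -exp (2 * z * I) / (1 - exp (2 * z * I)) ^ 2 := by
  set u := exp (z * I)
  have hu : u ≠ 0 := exp_ne_zero _
  have hexp2 : exp (2 * z * I) = u ^ 2 := by
    rw [← exp_nat_mul]; push_cast; ring_nf
  have hsin : sin z = (u⁻¹ - u) * I / 2 := by
    rw [sin, neg_mul, exp_neg]
  have hsq : (1 - u ^ 2) ^ 2 = -(4 * sin z ^ 2) * u ^ 2 := by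
    rw [hsin]; field_simp; linear_combination 4 * (1 - u ^ 2) ^ 2 * I_sq
  rw [hexp2, hsq, neg_mul, neg_div_neg_eq, div_mul_cancel_right₀ (pow_ne_zero 2 hu), one_div]

end Complex

theorem sum_one_div_four_mul_sin_sq (n : ℕ) (hn : 0 < n) :
    ∑ j ∈ Ico 1 n, 1 / (4 * Real.sin (j * Real.pi / n) ^ 2) = ((n : ℝ) ^ 2 - 1) / 12 := by
  have hζ := Complex.isPrimitiveRoot_exp n hn.ne'
  apply Complex.ofReal_injective
  push_cast
  rw [← neg_neg (((n : ℂ) ^ 2 - 1) / 12), ← neg_div, ← hζ.sum_pow_div_one_sub_pow_sq hn,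
    ← sum_neg_distrib]
  refine sum_congr rfl fun j _ => ?_
  rw [Complex.one_div_four_mul_sin_sq, ← Complex.exp_nat_mul,
    show (j : ℂ) * (2 * Real.pi * Complex.I / n) = 2 * (j * Real.pi / n) * Complex.I by ring,
    neg_div]

theorem sum_Ico_one_two_mul_of_reflect {M : Type*} [AddCommMonoid M] {f : ℕ → M} {k : ℕ}
    (hk : 0 < k) (hf : ∀ j ∈ Ico 1 k, f (2 * k - j) = f j) :
    ∑ j ∈ Ico 1 (2 * k), f j = 2 • ∑ j ∈ Ico 1 k, f j + f k := by
  have hreflect : ∑ j ∈ Ico (k + 1) (2 * k), f j = ∑ j ∈ Ico 1 k, f j := by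
    have h := sum_Ico_reflect f 1 (by omega : k ≤ 2 * k + 1)
    rw [show 2 * k + 1 - k = k + 1 by omega, Nat.add_sub_cancel] at h
    rw [← h]
    exact sum_congr rfl hf
  rw [← sum_Ico_consecutive f (by omega : 1 ≤ k + 1) (by omega : k + 1 ≤ 2 * k),
    sum_Ico_succ_top hk, hreflect, two_nsmul]
  abel

theorem stmt8 (k : ℕ) (hk : 2 ≤ k) :
    ∑ i ∈ Finset.Icc 1 (k - 1),
        1 / (4 * Real.sin ((i : ℝ) * Real.pi / (2 * (k : ℝ))) ^ 2)
      = ((k : ℝ) - 1) * ((k : ℝ) + 1) / 6 := by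
  set f : ℕ → ℝ := fun i => 1 / (4 * Real.sin ((i : ℝ) * Real.pi / (2 * (k : ℝ))) ^ 2)
  have hk0 : (k : ℝ) ≠ 0 := by positivity
  have hreflect : ∀ j ∈ Ico 1 k, f (2 * k - j) = f j := by
    intro j hj
    simp only [f, Nat.cast_sub (by have := mem_Ico.mp hj; omega : j ≤ 2 * k), Nat.cast_mul,
      Nat.cast_ofNat]
    rw [show (2 * k - j : ℝ) * Real.pi / (2 * k) = Real.pi - j * Real.pi / (2 * k) by
      field_simp, Real.sin_pi_sub]
  have hmid : f k = 1 / 4 := by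
    simp [f, mul_div_mul_right _ _ hk0, mul_comm (k : ℝ)]
  have hfull := sum_one_div_four_mul_sin_sq (2 * k) (by omega)
  push_cast at hfull
  rw [sum_Ico_one_two_mul_of_reflect (by omega) hreflect, two_nsmul, hmid] at hfull
  rw [← Ico_add_one_right_eq_Icc, Nat.sub_add_cancel (by omega)]
  linarith
end

section
/- For every integer k ≥ 2, the k×k symmetric matrix A with entries A_{ij} = k·min(i−1, j−1) − (i−1)(j−1), for 1 ≤ i,j ≤ k, has eigenvalues k/(4 sin²(jπ/(2k))) for j = 1, …, k−1, together with the eigenvalue 0; the eigenvector for eigenvalue 0 is (1,0,…,0)ᵀ and the eigenvector for the j-th nonzero eigenvalue has i-th entry √(2/k)·sin((i−1)jπ/k). -/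
/-!
On `{0, …, k}` the kernel `k * min n l - n * l` is `k` times the Green's function of the
second difference with Dirichlet conditions at `0` and `k`: applied to any `f`, the result
vanishes at `0` and `k` and has second difference `-k * f`. The sine vector
`s n = sin (n θ)`, `θ = jπ/k`, vanishes at `0` and `k` and has second difference
`-4 sin² (θ/2) * s`. Hence `A s - k / (4 sin² (θ/2)) * s` has zero second difference and
vanishes at both ends, so it is zero. Column `0` of the kernel vanishes, which gives the null
vector.
-/

open Real Finset

def secondDiff (u : ℕ → ℝ) (n : ℕ) : ℝ := u (n + 2) - 2 * u (n + 1) + u n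

theorem eq_zero_of_secondDiff_eq_zero {u : ℕ → ℝ} {k : ℕ} (h0 : u 0 = 0) (hk0 : u k = 0)
    (h : ∀ n, n + 2 ≤ k → secondDiff u n = 0) : ∀ n ≤ k, u n = 0 := by
  obtain rfl | hk := eq_or_ne k 0
  · exact fun n hn => by rwa [Nat.le_zero.mp hn]
  have hstep : ∀ n, n + 1 ≤ k → u (n + 1) = u n + u 1 := by
    intro n hn
    induction n with
    | zero => simp [h0]
    | succ n ih =>
      have := h n hn
      rw [secondDiff] at this
      linarith [ih (by omega)]
  have hlin : ∀ n ≤ k, u n = n * u 1 := by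
    intro n hn
    induction n with
    | zero => simp [h0]
    | succ n ih => rw [hstep n hn, ih (by omega)]; push_cast; ring
  have hu1 : u 1 = 0 := by
    simpa [hk0, hk] using (hlin k le_rfl).symm
  intro n hn
  simp [hlin n hn, hu1]

theorem secondDiff_min_natCast (n l : ℕ) :
    secondDiff (fun m => min (m : ℝ) l) n = if n + 1 = l then -1 else 0 := by
  have key : ((min (n + 2) l : ℕ) : ℤ) - 2 * (min (n + 1) l : ℕ) + (min n l : ℕ)
      = if n + 1 = l then -1 else 0 := by
    split_ifs <;> omega
  simp only [secondDiff, ← Nat.cast_min, Nat.cast_add, Nat.cast_ofNat]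
  exact_mod_cast key

theorem secondDiff_sin_mul (a θ : ℝ) (n : ℕ) :
    secondDiff (fun m : ℕ => a * sin (m * θ)) n
      = -(4 * sin (θ / 2) ^ 2) * (a * sin ((n + 1 : ℕ) * θ)) := by
  have hsum : sin ((n + 2 : ℕ) * θ) + sin (n * θ) = 2 * cos θ * sin ((n + 1 : ℕ) * θ) := by
    have h₁ : ((n + 2 : ℕ) : ℝ) * θ = (n + 1 : ℕ) * θ + θ := by push_cast; ring
    have h₂ : (n : ℝ) * θ = (n + 1 : ℕ) * θ - θ := by push_cast; ring
    rw [h₁, h₂, sin_add, sin_sub]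
    ring
  have hcos : cos θ = 1 - 2 * sin (θ / 2) ^ 2 := by
    rw [← cos_two_mul_eq_one_sub, mul_div_cancel₀ θ two_ne_zero]
  simp only [secondDiff]
  linear_combination a * hsum + 2 * a * sin ((n + 1 : ℕ) * θ) * hcos

def dirichletGreen (k : ℕ) (f : ℕ → ℝ) (n : ℕ) : ℝ :=
  ∑ l ∈ range k, ((k : ℝ) * min (n : ℝ) l - n * l) * f l

theorem dirichletGreen_zero (k : ℕ) (f : ℕ → ℝ) : dirichletGreen k f 0 = 0 := by
  simp [dirichletGreen]

theorem dirichletGreen_self (k : ℕ) (f : ℕ → ℝ) : dirichletGreen k f k = 0 := by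
  refine sum_eq_zero fun l hl => ?_
  rw [min_eq_right (by exact_mod_cast (mem_range.mp hl).le)]
  ring

theorem secondDiff_dirichletGreen (k : ℕ) (f : ℕ → ℝ) {n : ℕ} (hn : n + 2 ≤ k) :
    secondDiff (dirichletGreen k f) n = -k * f (n + 1) := by
  have hterm : ∀ l : ℕ, ((k : ℝ) * min ((n + 2 : ℕ) : ℝ) l - (n + 2 : ℕ) * l) * f l
      - 2 * (((k : ℝ) * min ((n + 1 : ℕ) : ℝ) l - (n + 1 : ℕ) * l) * f l)
      + ((k : ℝ) * min (n : ℝ) l - n * l) * f l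
      = if n + 1 = l then -k * f l else 0 := by
    intro l
    have h := secondDiff_min_natCast n l
    simp only [secondDiff] at h
    rw [← sub_eq_zero]
    split_ifs at h ⊢ <;> linear_combination (norm := (push_cast; ring)) (k : ℝ) * f l * h
  simp only [secondDiff, dirichletGreen, mul_sum, ← sum_sub_distrib, ← sum_add_distrib, hterm,
    sum_ite_eq, mem_range]
  rw [if_pos (by omega)]

theorem dirichletGreen_eq_of_secondDiff {k : ℕ} {f : ℕ → ℝ} {c : ℝ} (hc : c ≠ 0)
    (h0 : f 0 = 0) (hk0 : f k = 0) (hf : ∀ n, n + 2 ≤ k → secondDiff f n = -c * f (n + 1)) :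
    ∀ n ≤ k, dirichletGreen k f n = k / c * f n := by
  have hu := eq_zero_of_secondDiff_eq_zero (k := k)
    (u := fun n => dirichletGreen k f n - k / c * f n)
    (by simp [dirichletGreen_zero, h0]) (by simp [dirichletGreen_self, hk0]) fun n hn => by
      have hG := secondDiff_dirichletGreen k f hn
      have hF := hf n hn
      simp only [secondDiff] at hG hF ⊢
      field_simp
      linear_combination c * hG - k * hF
  exact fun n hn => sub_eq_zero.mp (hu n hn)

theorem sin_natCast_mul_pi_div_two_mul_pos {j k : ℕ} (hj : 0 < j) (hjk : j < k) :
    0 < sin (j * π / (2 * k)) := by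
  have hj0 : (0 : ℝ) < j := by exact_mod_cast hj
  have hjk : (j : ℝ) < k := by exact_mod_cast hjk
  have hk0 : (0 : ℝ) < k := hj0.trans hjk
  refine sin_pos_of_pos_of_lt_pi (by positivity) ?_
  rw [div_lt_iff₀ (by positivity)]
  nlinarith [pi_pos]

theorem stmt9_general (k : ℕ) :
    ((Matrix.of fun i j : Fin k => (k : ℝ) * min (i : ℝ) (j : ℝ) - (i : ℝ) * (j : ℝ)).mulVec
        (fun i => if (i : ℕ) = 0 then 1 else 0) = 0) ∧
    ∀ j : Fin k, (j : ℕ) ≠ 0 →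
      (Matrix.of fun i j : Fin k => (k : ℝ) * min (i : ℝ) (j : ℝ) - (i : ℝ) * (j : ℝ)).mulVec
          (fun i => Real.sqrt (2 / (k : ℝ)) * Real.sin ((i : ℝ) * (j : ℝ) * Real.pi / (k : ℝ)))
        = ((k : ℝ) / (4 * Real.sin ((j : ℝ) * Real.pi / (2 * (k : ℝ))) ^ 2)) •
          (fun i : Fin k => Real.sqrt (2 / (k : ℝ)) * Real.sin ((i : ℝ) * (j : ℝ) * Real.pi / (k : ℝ))) := by
  refine ⟨funext fun i => ?_, fun j hj => ?_⟩
  · simp only [Matrix.mulVec, dotProduct]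
    refine sum_eq_zero fun l _ => ?_
    split_ifs with hl <;> simp [hl]
  · set θ : ℝ := (j : ℝ) * π / k
    have hθ : ∀ x : ℝ, x * j * π / k = x * θ := fun x => by simp only [θ]; ring
    have hθ2 : (j : ℝ) * π / (2 * k) = θ / 2 := by simp only [θ]; ring
    have hc : 4 * sin (θ / 2) ^ 2 ≠ 0 := by
      have := sin_natCast_mul_pi_div_two_mul_pos (Nat.pos_of_ne_zero hj) j.is_lt
      rw [← hθ2]
      positivity
    have hG := dirichletGreen_eq_of_secondDiff hc
      (k := k) (f := fun m : ℕ => √(2 / k) * sin (m * θ)) (by simp)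
      (by simp [θ, mul_div_cancel₀, j.pos.ne', sin_nat_mul_pi])
      fun n _ => secondDiff_sin_mul _ θ n
    funext i
    simp only [hθ, hθ2, Matrix.mulVec, dotProduct, Matrix.of_apply, Pi.smul_apply, smul_eq_mul]
    rw [Fin.sum_univ_eq_sum_range
      (fun l => ((k : ℝ) * min (i : ℝ) l - i * l) * (√(2 / k) * sin (l * θ)))]
    exact hG i i.is_lt.le

theorem stmt9 (k : ℕ) (hk : 2 ≤ k) :
    ((Matrix.of fun i j : Fin k => (k : ℝ) * min (i : ℝ) (j : ℝ) - (i : ℝ) * (j : ℝ)).mulVec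
        (fun i => if (i : ℕ) = 0 then 1 else 0) = 0) ∧
    ∀ j : Fin k, (j : ℕ) ≠ 0 →
      (Matrix.of fun i j : Fin k => (k : ℝ) * min (i : ℝ) (j : ℝ) - (i : ℝ) * (j : ℝ)).mulVec
          (fun i => Real.sqrt (2 / (k : ℝ)) * Real.sin ((i : ℝ) * (j : ℝ) * Real.pi / (k : ℝ)))
        = ((k : ℝ) / (4 * Real.sin ((j : ℝ) * Real.pi / (2 * (k : ℝ))) ^ 2)) •
          (fun i : Fin k => Real.sqrt (2 / (k : ℝ)) * Real.sin ((i : ℝ) * (j : ℝ) * Real.pi / (k : ℝ))) :=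
  stmt9_general k
end

section
/- For positive reals λ_i = 1/(4 sin²(iπ/(2k))), i = 1,…,k−1, with k ≥ 2, the normalized sums satisfy (6/((k−1)(k+1))) ∑_{i=1}^{k−1} λ_i = 1; moreover, for each fixed i, k²·4 sin²(iπ/(2k)) → i²π² as k → ∞, i.e., λ_i / k² → 1/(i²π²) as k → ∞. -/
open Finset Complex

lemma sum_id_c (n : ℕ) : ∑ j ∈ range n, (j:ℂ) = n*(n-1)/2 := by
  induction n with
  | zero => simp
  | succ n ih => rw [Finset.sum_range_succ, ih]; push_cast; ring

lemma sum_sq_c (n : ℕ) : ∑ j ∈ range n, (j:ℂ)^2 = n*(n-1)*(2*n-1)/6 := by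
  induction n with
  | zero => simp
  | succ n ih => rw [Finset.sum_range_succ, ih]; push_cast; ring

lemma S1 {n : ℕ} {ω : ℂ} (hn : ω^n = 1) (hω : ω ≠ 1) :
    (∑ j ∈ range n, (j:ℂ)*ω^j) * (ω-1) = n := by
  have hg : ∑ j ∈ range n, ω^j = 0 := by
    rw [geom_sum_eq hω, hn]; simp
  have ht : ∑ j ∈ range n, (((j:ℂ)+1)*ω^(j+1) - (j:ℂ)*ω^j) = n * ω^n - 0 := by
    have := Finset.sum_range_sub (fun j => (j:ℂ)*ω^j) n
    simpa using this
  have hexp : ∑ j ∈ range n, (((j:ℂ)+1)*ω^(j+1) - (j:ℂ)*ω^j)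
      = (∑ j ∈ range n, (j:ℂ)*ω^j) * (ω-1) + ω * ∑ j ∈ range n, ω^j := by
    rw [Finset.sum_mul, Finset.mul_sum, ← Finset.sum_add_distrib]
    apply Finset.sum_congr rfl; intro j _; ring
  rw [hexp, hg, mul_zero, add_zero] at ht
  rw [ht, hn]; ring

lemma zeta_pow_eq_one_iff {n : ℕ} (hn : 0 < n) (m : ℕ) :
    Complex.exp (2*Real.pi*I/n) ^ m = 1 ↔ (n:ℤ) ∣ m := by
  rw [← Complex.exp_nat_mul, Complex.exp_eq_one_iff]
  have hn' : (n:ℂ) ≠ 0 := Nat.cast_ne_zero.mpr hn.ne'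
  have hπ : (2*Real.pi*I : ℂ) ≠ 0 := by
    simp [Real.pi_ne_zero, Complex.I_ne_zero, Complex.ofReal_ne_zero]
  constructor
  · rintro ⟨k, hk⟩
    refine ⟨k, ?_⟩
    field_simp at hk
    have hm : (m : ℂ) = k * n := by
      apply mul_right_cancel₀ hπ
      rw [hk]; ring
    have hm2 : (m : ℂ) = (n:ℂ) * k := hm.trans (by ring)
    exact_mod_cast hm2
  · rintro ⟨k, hk⟩
    refine ⟨k, ?_⟩
    have : (m:ℂ) = n * k := by exact_mod_cast hk
    field_simp [this]; linear_combination this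

lemma orth {n : ℕ} (hn : 0 < n) (m : ℕ) :
    ∑ i ∈ range n, (Complex.exp (2*Real.pi*I/n) ^ m) ^ i = if n ∣ m then (n:ℂ) else 0 := by
  set ζ := Complex.exp (2*Real.pi*I/n)
  by_cases h : n ∣ m
  · have h1 : ζ ^ m = 1 := (zeta_pow_eq_one_iff hn m).2 (Int.natCast_dvd_natCast.mpr h)
    simp [h, h1]
  · have h1 : ζ ^ m ≠ 1 := fun hc => h (Int.natCast_dvd_natCast.mp ((zeta_pow_eq_one_iff hn m).1 hc))
    rw [geom_sum_eq h1, if_neg h]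
    have hζn : ζ ^ n = 1 := by
      rw [zeta_pow_eq_one_iff hn]
    rw [← pow_mul, mul_comm, pow_mul, hζn, one_pow]
    simp
lemma keysum {n : ℕ} (hn : 2 ≤ n) :
    ∑ i ∈ Icc 1 (n-1), (Complex.exp (2*Real.pi*I/n))^i / (1 - (Complex.exp (2*Real.pi*I/n))^i)^2
      = -((n:ℂ)^2-1)/12 := by
  have hn0 : 0 < n := by omega
  have hnc : (n:ℂ) ≠ 0 := Nat.cast_ne_zero.mpr hn0.ne'
  set ζ := Complex.exp (2*Real.pi*I/n) with hζ
  have hzn : ζ^n = 1 := (zeta_pow_eq_one_iff hn0 n).2 dvd_rfl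
  set g : ℕ → ℂ := fun i => ζ^i * (∑ j ∈ range n, (j:ℂ)*(ζ^i)^j)^2 with hg
  -- step 1: per-term identity on Icc
  have hperm : ∀ i ∈ Icc 1 (n-1), ζ^i / (1-ζ^i)^2 = g i / (n:ℂ)^2 := by
    intro i hi
    simp only [Finset.mem_Icc] at hi
    have hωn : (ζ^i)^n = 1 := by
      rw [← pow_mul, mul_comm, pow_mul, hzn, one_pow]
    have hω1 : ζ^i ≠ 1 := by
      intro hc
      have h1 := (zeta_pow_eq_one_iff hn0 i).1 hc
      have h2 := Int.natCast_dvd_natCast.mp h1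
      have := Nat.le_of_dvd (by omega) h2
      omega
    have hS := S1 hωn hω1
    have h1ω : (1 - ζ^i) ≠ 0 := by
      intro hc; apply hω1; linear_combination -hc
    have key : ζ^i * (n:ℂ)^2 = g i * (1-ζ^i)^2 := by
      rw [hg]
      linear_combination (-(ζ^i) * ((∑ j ∈ range n, (j:ℂ)*(ζ^i)^j)*(ζ^i-1) + (n:ℂ))) * hS
    rw [div_eq_div_iff (pow_ne_zero 2 h1ω) (pow_ne_zero 2 hnc)]
    linear_combination key
  rw [Finset.sum_congr rfl hperm, ← Finset.sum_div]
  -- step 2: full range sum of g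
  have hfull : ∑ i ∈ range n, g i = (n:ℂ)^2*(n-1)*(n-2)/6 := by
    have hexpand : ∀ i, g i = ∑ j ∈ range n, ∑ l ∈ range n, (j:ℂ)*(l:ℂ)*((ζ^(j+l+1))^i) := by
      intro i
      rw [hg]; simp only [sq, Finset.sum_mul_sum]
      rw [Finset.mul_sum]
      apply Finset.sum_congr rfl; intro j _
      rw [Finset.mul_sum]
      apply Finset.sum_congr rfl; intro l _
      have hp : (ζ^(j+l+1))^i = (ζ^i)^j*((ζ^i)^l*ζ^i) := by
        rw [← pow_mul, ← pow_mul, ← pow_mul, ← pow_add, ← pow_add]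
        congr 1; ring
      rw [hp]; ring
    simp only [hexpand]
    rw [Finset.sum_comm]
    have hkey : ∀ j ∈ range n, ∑ i ∈ range n, ∑ l ∈ range n, (j:ℂ)*(l:ℂ)*((ζ^(j+l+1))^i)
        = (j:ℂ)*((n:ℂ)-1-j)*n := by
      intro j hj
      simp only [Finset.mem_range] at hj
      rw [Finset.sum_comm]
      have hl : ∀ l ∈ range n, ∑ i ∈ range n, (j:ℂ)*(l:ℂ)*((ζ^(j+l+1))^i)
          = (j:ℂ)*(l:ℂ)*(if n ∣ (j+l+1) then (n:ℂ) else 0) := by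
        intro l _
        rw [← Finset.mul_sum, orth hn0]
      rw [Finset.sum_congr rfl hl]
      rw [Finset.sum_eq_single (n-1-j)]
      · have hd : n ∣ (j+(n-1-j)+1) := by
          have : j+(n-1-j)+1 = n := by omega
          rw [this]
        rw [if_pos hd]
        have hc : ((n-1-j : ℕ):ℂ) = (n:ℂ)-1-j := by
          push_cast [Nat.cast_sub (by omega : j ≤ n-1), Nat.cast_sub (by omega : 1 ≤ n)]
          ring
        rw [hc]
      · intro l hl' hne
        simp only [Finset.mem_range] at hl'
        have hnd : ¬ n ∣ (j+l+1) := by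
          intro hd
          have h1 : 0 < j+l+1 := by omega
          have h2 : j+l+1 < 2*n := by omega
          have h3 := Nat.le_of_dvd h1 hd
          have h4 : j+l+1 ≠ n := by omega
          have h5 : 0 < j+l+1-n := by omega
          have h6 : n ∣ (j+l+1-n) := Nat.dvd_sub hd dvd_rfl
          have h7 := Nat.le_of_dvd h5 h6
          omega
        rw [if_neg hnd, mul_zero]
      · intro h
        exfalso; apply h; simp only [Finset.mem_range]; omega
    rw [Finset.sum_congr rfl hkey]
    have e1 := sum_id_c n
    have e2 := sum_sq_c n
    have hdec : ∑ j ∈ range n, (j:ℂ)*((n:ℂ)-1-j)*n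
        = ((n:ℂ)-1)*(∑ j ∈ range n, (j:ℂ))*n - (∑ j ∈ range n, (j:ℂ)^2)*n := by
      rw [Finset.mul_sum, Finset.sum_mul, Finset.sum_mul, ← Finset.sum_sub_distrib]
      apply Finset.sum_congr rfl; intro j _; ring
    rw [hdec, e1, e2]
    field_simp
    ring
  -- step 3: split off i = 0
  have hsplit : ∑ i ∈ range n, g i = g 0 + ∑ i ∈ Icc 1 (n-1), g i := by
    have h1 : range n = Finset.Ico 0 n := by rw [Finset.range_eq_Ico]
    have h2 : Icc 1 (n-1) = Finset.Ico 1 n := by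
      ext x; simp only [Finset.mem_Icc, Finset.mem_Ico]; omega
    rw [h1, h2, Finset.sum_eq_sum_Ico_succ_bot hn0]
  have hg0 : g 0 = ((n:ℂ)*(n-1)/2)^2 := by
    rw [hg]; simp only [pow_zero, one_pow, mul_one, one_mul]
    rw [sum_id_c n]
  have hrest : ∑ i ∈ Icc 1 (n-1), g i = (n:ℂ)^2*(n-1)*(n-2)/6 - ((n:ℂ)*(n-1)/2)^2 := by
    rw [← hfull, hsplit, hg0]; ring
  rw [hrest]
  field_simp
  ring
lemma real_sum {n : ℕ} (hn : 2 ≤ n) :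
    ∑ i ∈ Icc 1 (n-1), 1/(4*Real.sin ((i:ℝ)*Real.pi/n)^2) = ((n:ℝ)^2-1)/12 := by
  have hn0 : 0 < n := by omega
  have hnr : (0:ℝ) < n := by exact_mod_cast hn0
  have hnc : (n:ℂ) ≠ 0 := Nat.cast_ne_zero.mpr hn0.ne'
  set ζ := Complex.exp (2*Real.pi*I/n) with hζ
  have hterm : ∀ i ∈ Icc 1 (n-1),
      (((1/(4*Real.sin ((i:ℝ)*Real.pi/n)^2)) : ℝ) : ℂ) = -(ζ^i/(1-ζ^i)^2) := by
    intro i hi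
    simp only [Finset.mem_Icc] at hi
    set θ : ℝ := (i:ℝ)*Real.pi/n with hθ
    have hθpos : 0 < θ := by
      apply div_pos (mul_pos (by exact_mod_cast (by omega : 0 < i)) Real.pi_pos) hnr
    have hθlt : θ < Real.pi := by
      rw [hθ, div_lt_iff₀ hnr]
      have : (i:ℝ) < n := by exact_mod_cast (by omega : i < n)
      nlinarith [Real.pi_pos]
    have hs : Real.sin θ > 0 := Real.sin_pos_of_pos_of_lt_pi hθpos hθlt
    have hsne : (Real.sin θ : ℂ) ≠ 0 := by exact_mod_cast hs.ne'
    set E : ℂ := Complex.exp (θ*I) with hE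
    have hEne : E ≠ 0 := Complex.exp_ne_zero _
    have hζi : ζ^i = E^2 := by
      rw [hζ, hE, ← Complex.exp_nat_mul, ← Complex.exp_nat_mul]
      congr 1
      rw [hθ]; push_cast; field_simp
    have hωne : ζ^i ≠ 0 := by rw [hζi]; exact pow_ne_zero _ hEne
    have hsinE : (Real.sin θ : ℂ) = (E⁻¹ - E)*I/2 := by
      rw [Complex.ofReal_sin, Complex.sin, hE, neg_mul, Complex.exp_neg]
    have hIsq : ((E⁻¹ - E)*I/2)^2 = -(E⁻¹-E)^2/4 := by
      rw [div_pow, mul_pow, Complex.I_sq]; ring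
    have hsq : (1-ζ^i)^2 = -4*ζ^i*(Real.sin θ : ℂ)^2 := by
      rw [hζi, hsinE, hIsq]
      field_simp
    rw [hsq]
    push_cast
    have hζne : ζ ≠ 0 := Complex.exp_ne_zero _
    field_simp [hsne, hζne]
  have hsum : ((∑ i ∈ Icc 1 (n-1), 1/(4*Real.sin ((i:ℝ)*Real.pi/n)^2) : ℝ) : ℂ)
      = ((n:ℂ)^2-1)/12 := by
    rw [Complex.ofReal_sum, Finset.sum_congr rfl hterm, Finset.sum_neg_distrib, keysum hn]
    ring
  have h12 : (((((n:ℝ)^2-1)/12 : ℝ)) : ℂ) = ((n:ℂ)^2-1)/12 := by push_cast; ring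
  exact Complex.ofReal_injective (hsum.trans h12.symm)
lemma half_sum {k : ℕ} (hk : 2 ≤ k) :
    ∑ i ∈ Icc 1 (k-1), 1/(4*Real.sin ((i:ℝ)*Real.pi/(2*(k:ℝ)))^2) = ((k:ℝ)^2-1)/6 := by
  have hkr : (0:ℝ) < k := by exact_mod_cast (by omega : 0 < k)
  set f : ℕ → ℝ := fun i => 1/(4*Real.sin ((i:ℝ)*Real.pi/(2*(k:ℝ)))^2) with hf
  have hfull : ∑ i ∈ Icc 1 (2*k-1), f i = ((2*(k:ℝ))^2-1)/12 := by
    have h := real_sum (n := 2*k) (by omega)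
    have hcast : ((2*k : ℕ):ℝ) = 2*(k:ℝ) := by push_cast; ring
    rw [hcast] at h
    exact h
  have h1 : Icc 1 (2*k-1) = Finset.Ico 1 (2*k) := by
    ext x; simp only [Finset.mem_Icc, Finset.mem_Ico]; omega
  have h2 : Icc 1 (k-1) = Finset.Ico 1 k := by
    ext x; simp only [Finset.mem_Icc, Finset.mem_Ico]; omega
  have hsplit1 : ∑ i ∈ Finset.Ico 1 k, f i + ∑ i ∈ Finset.Ico k (2*k), f i
      = ∑ i ∈ Finset.Ico 1 (2*k), f i :=
    Finset.sum_Ico_consecutive f (by omega) (by omega)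
  have hsplit2 : ∑ i ∈ Finset.Ico k (k+1), f i + ∑ i ∈ Finset.Ico (k+1) (2*k), f i
      = ∑ i ∈ Finset.Ico k (2*k), f i :=
    Finset.sum_Ico_consecutive f (by omega) (by omega)
  have hmid : ∑ i ∈ Finset.Ico k (k+1), f i = 1/4 := by
    rw [Finset.sum_Ico_succ_top (le_refl k), Finset.Ico_self, Finset.sum_empty, zero_add]
    have : (k:ℝ)*Real.pi/(2*(k:ℝ)) = Real.pi/2 := by
      field_simp
    rw [hf]; simp only [this, Real.sin_pi_div_two]; norm_num
  have hrefl : ∑ i ∈ Finset.Ico (k+1) (2*k), f i = ∑ i ∈ Finset.Ico 1 k, f i := by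
    apply Finset.sum_nbij' (i := fun x => 2*k - x) (j := fun x => 2*k - x)
    · intro a ha; simp only [Finset.mem_Ico] at *; omega
    · intro a ha; simp only [Finset.mem_Ico] at *; omega
    · intro a ha; simp only [Finset.mem_Ico] at ha; omega
    · intro a ha; simp only [Finset.mem_Ico] at ha; omega
    · intro a ha
      simp only [Finset.mem_Ico] at ha
      rw [hf]
      have hc : ((2*k - a : ℕ):ℝ) = 2*(k:ℝ) - a := by
        push_cast [Nat.cast_sub (by omega : a ≤ 2*k)]; ring
      simp only [hc]
      have hang : (2*(k:ℝ) - a)*Real.pi/(2*(k:ℝ)) = Real.pi - (a:ℝ)*Real.pi/(2*(k:ℝ)) := by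
        field_simp
      rw [hang, Real.sin_pi_sub]
  have := hfull
  rw [h1, ← hsplit1, ← hsplit2, hmid, hrefl] at this
  rw [h2]
  nlinarith [this]

theorem stmt16 :
    (∀ k : ℕ, 2 ≤ k →
      (6 / (((k : ℝ) - 1) * ((k : ℝ) + 1))) *
          ∑ i ∈ Finset.Icc 1 (k - 1),
            1 / (4 * Real.sin ((i : ℝ) * Real.pi / (2 * (k : ℝ))) ^ 2) = 1) ∧
    ∀ i : ℕ, 1 ≤ i →
      Filter.Tendsto
        (fun k : ℕ =>
          (1 / (4 * Real.sin ((i : ℝ) * Real.pi / (2 * (k : ℝ))) ^ 2)) / (k : ℝ) ^ 2)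
        Filter.atTop (nhds (1 / ((i : ℝ) ^ 2 * Real.pi ^ 2))) := by
  constructor
  · intro k hk
    rw [half_sum hk]
    have h1 : (k:ℝ) - 1 ≠ 0 := by
      have : (2:ℝ) ≤ k := by exact_mod_cast hk
      linarith
    have h2 : (k:ℝ) + 1 ≠ 0 := by
      have : (2:ℝ) ≤ k := by exact_mod_cast hk
      linarith
    field_simp
    ring
  · intro i hi
    have hiR : (0:ℝ) < i := by exact_mod_cast hi
    have hπ := Real.pi_pos
    set θ : ℕ → ℝ := fun k => (i:ℝ)*Real.pi/(2*(k:ℝ)) with hθdef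
    have hθ0 : Filter.Tendsto θ Filter.atTop (nhds 0) := by
      have h : θ = fun k : ℕ => ((i:ℝ)*Real.pi/2) * (1/(k:ℝ)) := by
        funext k; rw [hθdef]; ring
      rw [h]
      have : Filter.Tendsto (fun n : ℕ => 1/(n:ℝ)) Filter.atTop (nhds 0) := tendsto_one_div_atTop_nhds_zero_nat
      simpa using this.const_mul ((i:ℝ)*Real.pi/2)
    have hθne : ∀ᶠ k : ℕ in Filter.atTop, θ k ∈ ({0}ᶜ : Set ℝ) := by
      filter_upwards [Filter.eventually_ge_atTop 1] with k hk
      have hkR : (0:ℝ) < k := by exact_mod_cast (by omega : 0 < k)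
      have : 0 < θ k := by
        rw [hθdef]
        positivity
      simp [this.ne']
    have hθ : Filter.Tendsto θ Filter.atTop (nhdsWithin 0 {0}ᶜ) :=
      tendsto_nhdsWithin_of_tendsto_nhds_of_eventually_within θ hθ0 hθne
    have hslope : Filter.Tendsto (fun x : ℝ => Real.sin x / x) (nhdsWithin 0 {0}ᶜ) (nhds 1) := by
      have hd : HasDerivAt Real.sin 1 0 := by
        simpa using Real.hasDerivAt_sin 0
      have := hasDerivAt_iff_tendsto_slope.mp hd
      have hfun : slope Real.sin 0 = fun x : ℝ => Real.sin x / x := by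
        funext x; simp [slope_def_field]
      rwa [hfun] at this
    have hcomp : Filter.Tendsto (fun k : ℕ => Real.sin (θ k) / θ k) Filter.atTop (nhds 1) :=
      hslope.comp hθ
    have hmain : Filter.Tendsto
        (fun k : ℕ => ((Real.sin (θ k) / θ k)^2)⁻¹ * (1 / ((i:ℝ)^2*Real.pi^2)))
        Filter.atTop (nhds (((1:ℝ)^2)⁻¹ * (1 / ((i:ℝ)^2*Real.pi^2)))) :=
      (((hcomp.pow 2).inv₀ (by norm_num)).mul_const _)
    have hlim : (((1:ℝ)^2)⁻¹ * (1 / ((i:ℝ)^2*Real.pi^2))) = 1 / ((i:ℝ)^2*Real.pi^2) := by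
      norm_num
    rw [hlim] at hmain
    apply hmain.congr'
    filter_upwards [Filter.eventually_ge_atTop (i+1)] with k hk
    have hkR : (0:ℝ) < k := by exact_mod_cast (by omega : 0 < k)
    have hθpos : 0 < θ k := by rw [hθdef]; positivity
    have hθlt : θ k < Real.pi := by
      rw [hθdef, div_lt_iff₀ (by positivity)]
      have hik : (i:ℝ) + 1 ≤ k := by exact_mod_cast hk
      nlinarith
    have hs : 0 < Real.sin (θ k) := Real.sin_pos_of_pos_of_lt_pi hθpos hθlt
    rw [hθdef]
    field_simp
    ring
end
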